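/- arXiv:math/0304249 — 2 statements merged into one kernel-verified Lean document; each statement's English description precedes it below -/
import Mathlib

section
/- For indeterminates $X_1,\dots,X_r$, $A$, $B$ and base $q$, the determinant $\det_{1\le i,j\le r}\left(X_i^{r-j}\frac{(A/X_i;q)_{r-j}}{(BX_i;q)_{r-j}}\right)$ equals $\prod_{1\le i<j\le r}(X_i-X_j)\prod_{i=1}^r\frac{(ABq^{2r-2i};q)_{i-1}}{(BX_i;q)_{r-1}}$. -/
/-!
Multiplying row `i` by `(B X_i; q)_{r-1}` turns the matrix into `(p_j(X_i))` with
`p_j(x) = ∏_{s < r-1-j} (x - A q^s) · ∏_{r-1-j ≤ s < r-1} (1 - B x q^s)`, a polynomial of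
degree `< r`. For such polynomials `det (p_j(x_i))` is the Vandermonde product times a constant
independent of `x`, and that constant is read off at `x_i = A q^{r-1-i}`, where the matrix is
upper triangular. These points are distinct when `A ≠ 0` and `q^a ≠ q^b` for `a ≠ b < r`; the
remaining `(A, q)` follow by continuity.
-/

open Finset

/-- The $q$-shifted factorial $(a;q)_k = \prod_{j=0}^{k-1}(1-aq^j)$. -/
noncomputable def qp (q a : ℂ) (k : ℕ) : ℂ := ∏ j ∈ Finset.range k, (1 - a * q ^ j)

open Polynomial

namespace Matrix

variable {R : Type*} [CommRing R] {n : ℕ}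

theorem eval_polynomials_eq_vandermonde_mul_coeff (v : Fin n → R) (p : Fin n → R[X])
    (hp : ∀ j, (p j).natDegree < n) :
    of (fun i j => (p j).eval (v i)) = vandermonde v * of (fun (i j : Fin n) => (p j).coeff i) := by
  ext i j
  rw [mul_apply, of_apply, eval_eq_sum_range' (hp j), ← Fin.sum_univ_eq_sum_range]
  exact Finset.sum_congr rfl fun k _ => mul_comm _ _

theorem prod_Ioi_sub_eq_mul_det_vandermonde (v : Fin n → R) :
    ∏ i, ∏ j ∈ Ioi i, (v i - v j)
      = (∏ i : Fin n, ∏ _j ∈ Ioi i, (-1 : R)) * (vandermonde v).det := by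
  simp only [det_vandermonde, ← prod_mul_distrib, neg_one_mul, neg_sub]

theorem det_eval_polynomials_mul_prod_sub_comm (p : Fin n → R[X])
    (hp : ∀ j, (p j).natDegree < n) (x y : Fin n → R) :
    (of fun i j => (p j).eval (x i)).det * ∏ i, ∏ j ∈ Ioi i, (y i - y j)
      = (of fun i j => (p j).eval (y i)).det * ∏ i, ∏ j ∈ Ioi i, (x i - x j) := by
  simp only [eval_polynomials_eq_vandermonde_mul_coeff _ p hp, det_mul,
    prod_Ioi_sub_eq_mul_det_vandermonde]
  ring

theorem det_eval_polynomials_eq_of_eq [IsDomain R] (p : Fin n → R[X])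
    (hp : ∀ j, (p j).natDegree < n) {y : Fin n → R} (hy : Function.Injective y) {c : R}
    (hc : (of fun i j => (p j).eval (y i)).det = c * ∏ i, ∏ j ∈ Ioi i, (y i - y j))
    (x : Fin n → R) :
    (of fun i j => (p j).eval (x i)).det = c * ∏ i, ∏ j ∈ Ioi i, (x i - x j) := by
  have hy0 : ∏ i, ∏ j ∈ Ioi i, (y i - y j) ≠ 0 :=
    prod_ne_zero_iff.2 fun i _ => prod_ne_zero_iff.2 fun j hj =>
      sub_ne_zero.2 (hy.ne (mem_Ioi.1 hj).ne)
  apply mul_right_cancel₀ hy0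
  rw [det_eval_polynomials_mul_prod_sub_comm p hp, hc]
  ring

end Matrix

theorem Complex.dense_setOf_injOn_pow (n : ℕ) :
    Dense {q : ℂ | Set.InjOn (q ^ ·) (Set.Iio n)} := by
  have hfin : {q : ℂ | ¬ Set.InjOn (q ^ ·) (Set.Iio n)}.Finite := by
    refine ((Set.finite_Iio n).biUnion fun a _ => (Set.finite_Iio n).biUnion fun b _ =>
      (show {q : ℂ | a ≠ b ∧ q ^ a = q ^ b}.Finite from ?_)).subset ?_
    · by_cases hab : a = b
      · simp [hab]
      · refine (finite_setOfPred_isRoot (p := X ^ a - X ^ b) ?_).subset fun q hq => ?_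
        · rw [sub_ne_zero, X_pow_eq_monomial, X_pow_eq_monomial, Ne, monomial_left_inj one_ne_zero]
          exact hab
        · simp [hq.2]
    · intro q hq
      simp only [Set.InjOn, Set.mem_Iio, not_forall, Set.mem_ofPred_eq] at hq
      obtain ⟨a, ha, b, hb, hab, hne⟩ := hq
      exact Set.mem_biUnion ha (Set.mem_biUnion hb ⟨hne, hab⟩)
  simpa [Set.compl_ofPred] using hfin.countable.dense_compl ℂ

theorem qp_eq_mul_prod_Ico (q a : ℂ) {m n : ℕ} (h : m ≤ n) :
    qp q a n = qp q a m * ∏ s ∈ Ico m n, (1 - a * q ^ s) := by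
  rw [qp, qp, range_eq_Ico, range_eq_Ico, prod_Ico_consecutive _ (Nat.zero_le m) h]

theorem pow_mul_qp_div (q a : ℂ) {x : ℂ} (hx : x ≠ 0) (k : ℕ) :
    x ^ k * qp q (a / x) k = ∏ s ∈ range k, (x - a * q ^ s) := by
  rw [qp, ← card_range k, ← prod_const, card_range, ← prod_mul_distrib]
  refine prod_congr rfl fun s _ => ?_
  field_simp

noncomputable def entryPoly (r : ℕ) (A B q : ℂ) (j : ℕ) : ℂ[X] :=
  (∏ s ∈ range (r - 1 - j), (X - C (A * q ^ s))) *
    ∏ s ∈ Ico (r - 1 - j) (r - 1), (1 - C (B * q ^ s) * X)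

theorem eval_entryPoly (r : ℕ) (A B q x : ℂ) (j : ℕ) :
    (entryPoly r A B q j).eval x
      = (∏ s ∈ range (r - 1 - j), (x - A * q ^ s)) *
          ∏ s ∈ Ico (r - 1 - j) (r - 1), (1 - B * x * q ^ s) := by
  simp only [entryPoly, eval_mul, eval_prod, eval_sub, eval_X, eval_C, eval_one]
  congr 1
  exact prod_congr rfl fun s _ => by ring

theorem natDegree_entryPoly_lt {r : ℕ} (A B q : ℂ) {j : ℕ} (hj : j < r) :
    (entryPoly r A B q j).natDegree < r := by
  have hlin : ∀ s, (1 - C (B * q ^ s) * X).natDegree ≤ 1 := fun s => by compute_degree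
  calc (entryPoly r A B q j).natDegree
      ≤ ∑ s ∈ range (r - 1 - j), (X - C (A * q ^ s)).natDegree
        + ∑ s ∈ Ico (r - 1 - j) (r - 1), (1 - C (B * q ^ s) * X).natDegree :=
        natDegree_mul_le.trans (add_le_add (natDegree_prod_le _ _) (natDegree_prod_le _ _))
    _ ≤ #(range (r - 1 - j)) • 1 + #(Ico (r - 1 - j) (r - 1)) • 1 :=
        add_le_add (sum_le_card_nsmul _ _ _ fun s _ => natDegree_X_sub_C_le _)
          (sum_le_card_nsmul _ _ _ fun s _ => hlin s)
    _ < r := by simp; omega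

theorem eval_entryPoly_eq_zero_of_lt {r : ℕ} (A B q : ℂ) {i j : ℕ} (hij : j < i)
    (hi : i < r) :
    (entryPoly r A B q j).eval (A * q ^ (r - 1 - i)) = 0 := by
  rw [eval_entryPoly, prod_eq_zero (i := r - 1 - i) (mem_range.2 (by omega)) (sub_self _), zero_mul]

theorem Fin.prod_Ioi_rev_eq_prod_range {M : Type*} [CommMonoid M] {r : ℕ} (f : ℕ → M)
    (i : Fin r) :
    ∏ j ∈ Ioi i, f (r - 1 - j.1) = ∏ s ∈ range (r - 1 - i.1), f s := by
  have hi := i.isLt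
  refine prod_nbij' (fun j => r - 1 - j.1) (fun s => ⟨r - 1 - s, by omega⟩) ?_ ?_ ?_ ?_ ?_ <;>
    intro j hj <;> simp only [mem_Ioi, mem_range, Fin.lt_def, Fin.ext_iff] at hj ⊢
  all_goals omega

theorem eval_entryPoly_diag {r : ℕ} (A B q : ℂ) (i : Fin r) :
    (entryPoly r A B q i).eval (A * q ^ (r - 1 - i.1))
      = (∏ j ∈ Ioi i, (A * q ^ (r - 1 - i.1) - A * q ^ (r - 1 - j.1)))
        * qp q (A * B * q ^ (2 * r - 2 * (i.1 + 1))) i := by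
  rw [eval_entryPoly, Fin.prod_Ioi_rev_eq_prod_range (fun s => A * q ^ (r - 1 - i.1) - A * q ^ s),
    prod_Ico_eq_prod_range, qp, show r - 1 - (r - 1 - i.1) = i.1 by omega]
  congr 1
  refine prod_congr rfl fun t _ => ?_
  rw [show 2 * r - 2 * (i.1 + 1) = (r - 1 - i.1) + (r - 1 - i.1) by omega]
  ring

theorem det_eval_entryPoly_of_injOn {r : ℕ} {A q : ℂ} (hA : A ≠ 0)
    (hq : Set.InjOn (q ^ ·) (Set.Iio r)) (B : ℂ) (x : Fin r → ℂ) :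
    (Matrix.of fun i j : Fin r => (entryPoly r A B q j).eval (x i)).det
      = (∏ i : Fin r, qp q (A * B * q ^ (2 * r - 2 * (i.1 + 1))) i) *
          ∏ i, ∏ j ∈ Ioi i, (x i - x j) := by
  refine Matrix.det_eval_polynomials_eq_of_eq _ (fun j => natDegree_entryPoly_lt A B q j.isLt)
    (y := fun i => A * q ^ (r - 1 - i.1)) ?_ ?_ x
  · intro i j hij
    have hexp : r - 1 - i.1 = r - 1 - j.1 :=
      hq (by simp; omega) (by simp; omega) (mul_left_cancel₀ hA hij)
    exact Fin.ext (by omega)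
  · refine (Matrix.det_of_isUpperTriangular fun (i j : Fin r) (hji : j < i) =>
      eval_entryPoly_eq_zero_of_lt A B q hji i.isLt).trans ?_
    simp only [eval_entryPoly_diag, prod_mul_distrib]
    ring

theorem det_eval_entryPoly (r : ℕ) (A B q : ℂ) (x : Fin r → ℂ) :
    (Matrix.of fun i j : Fin r => (entryPoly r A B q j).eval (x i)).det
      = (∏ i : Fin r, qp q (A * B * q ^ (2 * r - 2 * (i.1 + 1))) i) *
          ∏ i, ∏ j ∈ Ioi i, (x i - x j) := by
  let F : ℂ × ℂ → ℂ := fun p =>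
    (Matrix.of fun i j : Fin r => (entryPoly r p.1 B p.2 j).eval (x i)).det
  let G : ℂ × ℂ → ℂ := fun p =>
    (∏ i : Fin r, qp p.2 (p.1 * B * p.2 ^ (2 * r - 2 * (i.1 + 1))) i) *
      ∏ i, ∏ j ∈ Ioi i, (x i - x j)
  have hF : Continuous F := by
    simp only [F, eval_entryPoly]
    fun_prop
  have hG : Continuous G := by
    simp only [G, qp]
    fun_prop
  have hFG : Set.EqOn F G ({0}ᶜ ×ˢ {q : ℂ | Set.InjOn (q ^ ·) (Set.Iio r)}) :=
    fun p hp => det_eval_entryPoly_of_injOn hp.1 hp.2 B x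
  have hdense := (dense_compl_singleton (0 : ℂ)).prod (Complex.dense_setOf_injOn_pow r)
  exact congrFun (hF.ext_on hdense hG hFG) (A, q)

theorem pow_mul_qp_div_div_qp (q A B : ℂ) {x : ℂ} (hx : x ≠ 0) {k n : ℕ} (hkn : k ≤ n)
    (hd : qp q (B * x) n ≠ 0) :
    x ^ k * qp q (A / x) k / qp q (B * x) k
      = (∏ s ∈ range k, (x - A * q ^ s)) * (∏ s ∈ Ico k n, (1 - B * x * q ^ s)) /
          qp q (B * x) n := by
  rw [qp_eq_mul_prod_Ico _ _ hkn] at hd ⊢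
  rw [pow_mul_qp_div _ _ hx, mul_div_mul_right _ _ (right_ne_zero_of_mul hd)]

theorem stmt_1 (r : ℕ) (X : Fin r → ℂ) (A B q : ℂ)
    (hX : ∀ i, X i ≠ 0)
    (hd : ∀ i, qp q (B * X i) (r - 1) ≠ 0) :
    Matrix.det (Matrix.of fun i j : Fin r =>
      X i ^ (r - 1 - j.1) * qp q (A / X i) (r - 1 - j.1) / qp q (B * X i) (r - 1 - j.1))
    = (∏ i : Fin r, ∏ j ∈ Finset.Ioi i, (X i - X j))
      * ∏ i : Fin r,
          qp q (A * B * q ^ (2 * r - 2 * (i.1 + 1))) i.1 / qp q (B * X i) (r - 1) := by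
  have hentry : (Matrix.of fun i j : Fin r =>
      X i ^ (r - 1 - j.1) * qp q (A / X i) (r - 1 - j.1) / qp q (B * X i) (r - 1 - j.1))
      = Matrix.of fun i j => (qp q (B * X i) (r - 1))⁻¹ *
          (Matrix.of fun i j : Fin r => (entryPoly r A B q j).eval (X i)) i j := by
    ext i j
    simp only [Matrix.of_apply]
    rw [pow_mul_qp_div_div_qp q A B (hX i) (Nat.sub_le _ _) (hd i),
      eval_entryPoly, inv_mul_eq_div]
  rw [hentry, Matrix.det_mul_column, det_eval_entryPoly, prod_div_distrib, prod_inv_distrib]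
  ring
end

section
/- The two determinants $\det_{1\le i,j\le r}\left(\frac{(z_i;q)_{r-j}}{(a_iz_i;q)_{r-j}}\right)$ and $(-1)^{\binom r2}q^{\binom r3}\det_{1\le i,j\le r}\left(z_i^{r-j}\frac{(a_i;q)_{r-j}}{(a_iz_i;q)_{r-j}}\right)$ are equal. -/
/-!
Column by column, the left matrix is obtained from the right one by a change of basis that
does not depend on the row: `(z;q)_n / (az;q)_n = ∑_{m ≤ n} c_{n,m} z^m (a;q)_m / (az;q)_m`
with coefficients `c_{n,m}` depending on `q` only, and `c_{n,m} = 0` for `m > n`. This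
expansion follows by induction on `n` from `(z;q)_{n+1} = (1 - z) (zq;q)_n` and a summation
by parts. The determinants therefore differ by the factor
`∏_{m < r} c_{m,m} = ∏_{m < r} (-1)^m q^(m choose 2)`.
-/

open Finset

theorem qp_add (q x : ℂ) (m k : ℕ) : qp q x (m + k) = qp q x m * qp q (x * q ^ m) k := by
  simp only [qp, prod_range_add, pow_add, mul_assoc]

theorem qp_succ (q x : ℂ) (n : ℕ) : qp q x (n + 1) = qp q x n * (1 - x * q ^ n) :=
  prod_range_succ _ _

theorem qp_succ' (q x : ℂ) (n : ℕ) : qp q x (n + 1) = (1 - x) * qp q (x * q) n := by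
  rw [add_comm, qp_add]
  simp [qp]

theorem qp_ne_zero_of_le {q x : ℂ} {m n : ℕ} (h : m ≤ n) (hn : qp q x n ≠ 0) :
    qp q x m ≠ 0 := by
  obtain ⟨k, rfl⟩ := Nat.exists_eq_add_of_le h
  rw [qp_add] at hn
  exact left_ne_zero_of_mul hn

/-- `(-1)^m q^(m choose 2)` times the Gaussian binomial `[n choose m]_q`; the recursion is a signed
form of `q`-Pascal. -/
noncomputable def signedQBinomial (q : ℂ) : ℕ → ℕ → ℂ
  | _, 0 => 1
  | 0, _ + 1 => 0
  | n + 1, m + 1 => q ^ (m + 1) * signedQBinomial q n (m + 1) - q ^ m * signedQBinomial q n m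

theorem signedQBinomial_eq_zero_of_lt (q : ℂ) :
    ∀ {n m : ℕ}, n < m → signedQBinomial q n m = 0
  | 0, _ + 1, _ => rfl
  | n + 1, m + 1, h => by
    rw [signedQBinomial, signedQBinomial_eq_zero_of_lt q (by omega),
      signedQBinomial_eq_zero_of_lt q (by omega)]
    ring

theorem signedQBinomial_self (q : ℂ) :
    ∀ n : ℕ, signedQBinomial q n n = (-1) ^ n * q ^ n.choose 2
  | 0 => by simp [signedQBinomial]
  | n + 1 => by
    rw [signedQBinomial, signedQBinomial_eq_zero_of_lt q n.lt_succ_self, signedQBinomial_self q n,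
      Nat.choose_succ_succ', Nat.choose_one_right, pow_add]
    ring

theorem sum_range_choose_eq_choose_succ (r k : ℕ) :
    ∑ m ∈ range r, m.choose k = r.choose (k + 1) := by
  induction r with
  | zero => simp
  | succ r ih => rw [sum_range_succ, ih, Nat.choose_succ_succ', add_comm]

theorem prod_range_signedQBinomial_self (q : ℂ) (r : ℕ) :
    ∏ m ∈ range r, signedQBinomial q m m = (-1) ^ r.choose 2 * q ^ r.choose 3 := by
  rw [prod_congr rfl fun m _ => signedQBinomial_self q m, prod_mul_distrib, prod_pow_eq_pow_sum,
    prod_pow_eq_pow_sum, ← sum_range_choose_eq_choose_succ, ← sum_range_choose_eq_choose_succ]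
  simp only [Nat.choose_one_right]

/-- Summation by parts against the recurrence defining `signedQBinomial`. -/
theorem sum_signedQBinomial_succ_mul (q : ℂ) (n : ℕ) (T : ℕ → ℂ) :
    ∑ m ∈ range (n + 2), signedQBinomial q (n + 1) m * T m
      = ∑ m ∈ range (n + 1), q ^ m * signedQBinomial q n m * (T m - T (m + 1)) := by
  have hpad : ∑ m ∈ range (n + 1), q ^ m * signedQBinomial q n m * T m
      = ∑ m ∈ range (n + 2), q ^ m * signedQBinomial q n m * T m := by
    rw [sum_range_succ _ (n + 1), signedQBinomial_eq_zero_of_lt q n.lt_succ_self, mul_zero,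
      zero_mul, add_zero]
  simp only [mul_sub, sum_sub_distrib, hpad]
  rw [sum_range_succ', sum_range_succ' (fun m => q ^ m * signedQBinomial q n m * T m)]
  simp only [signedQBinomial, sub_mul, sum_sub_distrib, pow_zero, one_mul, pow_succ]
  abel

theorem qp_telescope (q a z : ℂ) (m k : ℕ) :
    z ^ m * qp q a m * qp q (a * z * q ^ m) (k + 1)
      - z ^ (m + 1) * qp q a (m + 1) * qp q (a * z * q ^ (m + 1)) k
      = (1 - z) * z ^ m * qp q a m * qp q (a * z * q ^ (m + 1)) k := by
  rw [qp_succ', qp_succ, pow_succ q m, ← mul_assoc (a * z)]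
  ring

theorem qp_eq_sum_signedQBinomial (q a : ℂ) (n : ℕ) : ∀ z : ℂ,
    qp q z n = ∑ m ∈ range (n + 1),
      signedQBinomial q n m * (z ^ m * qp q a m * qp q (a * z * q ^ m) (n - m)) := by
  induction n with
  | zero => simp [qp, signedQBinomial]
  | succ n ih =>
    intro z
    rw [sum_signedQBinomial_succ_mul, qp_succ', ih, mul_sum]
    refine sum_congr rfl fun m hm => ?_
    obtain ⟨k, hk⟩ := Nat.exists_eq_add_of_le (Nat.lt_succ_iff.mp (mem_range.mp hm))
    rw [show n + 1 - m = k + 1 by omega, show n + 1 - (m + 1) = k by omega, show n - m = k by omega,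
      qp_telescope, show a * (z * q) * q ^ m = a * z * q ^ (m + 1) by ring]
    ring

theorem qp_div_qp_eq_sum_signedQBinomial (q a z : ℂ) (n : ℕ) (h : qp q (a * z) n ≠ 0) :
    qp q z n / qp q (a * z) n
      = ∑ m ∈ range (n + 1), signedQBinomial q n m * (z ^ m * qp q a m / qp q (a * z) m) := by
  rw [div_eq_iff h, qp_eq_sum_signedQBinomial q a n z, sum_mul]
  refine sum_congr rfl fun m hm => ?_
  obtain ⟨k, rfl⟩ := Nat.exists_eq_add_of_le (Nat.lt_succ_iff.mp (mem_range.mp hm))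
  have hm0 : qp q (a * z) m ≠ 0 := qp_ne_zero_of_le (Nat.le_add_right m k) h
  rw [qp_add, Nat.add_sub_cancel_left]
  field_simp

namespace Matrix

variable {R : Type*} [CommRing R] {r : ℕ}

theorem det_of_eq_sum_triangular (c : ℕ → ℕ → R) (hc : ∀ {n m}, n < m → c n m = 0)
    (F G : Fin r → ℕ → R)
    (hFG : ∀ i, ∀ n < r, F i n = ∑ m ∈ range (n + 1), c n m * G i m) :
    (of fun i j : Fin r => F i j).det
      = (∏ m ∈ range r, c m m) * (of fun i j : Fin r => G i j).det := by
  set U : Matrix (Fin r) (Fin r) R := of fun m j => c j m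
  have hU : U.IsUpperTriangular := fun _ _ h => hc h
  have hmul : (of fun i j : Fin r => F i j) = (of fun i j : Fin r => G i j) * U := by
    ext i j
    simp only [mul_apply, of_apply, U]
    rw [hFG i j j.isLt, Fin.sum_univ_eq_sum_range (fun m => G i m * c j m)]
    refine (sum_subset (range_subset_range.mpr j.isLt) fun m _ hm => ?_).trans ?_
    · rw [hc (by simpa using hm), zero_mul]
    · simp only [mul_comm]
  rw [hmul, det_mul, det_of_isUpperTriangular hU, mul_comm]
  simp only [U, of_apply, Fin.prod_univ_eq_prod_range (fun m => c m m)]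

theorem det_of_eq_sum_triangular_rev (c : ℕ → ℕ → R) (hc : ∀ {n m}, n < m → c n m = 0)
    (F G : Fin r → ℕ → R)
    (hFG : ∀ i, ∀ n < r, F i n = ∑ m ∈ range (n + 1), c n m * G i m) :
    (of fun i j : Fin r => F i (r - 1 - j)).det
      = (∏ m ∈ range r, c m m) * (of fun i j : Fin r => G i (r - 1 - j)).det := by
  have hrev (H : Fin r → ℕ → R) : (of fun i j : Fin r => H i (r - 1 - j))
      = (of fun i j : Fin r => H i j).submatrix id Fin.revPerm := by
    ext i j
    simp only [submatrix_apply, of_apply, id, Fin.revPerm_apply, Fin.val_rev]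
    congr 1
    omega
  rw [hrev, hrev, det_permute', det_permute', det_of_eq_sum_triangular c hc F G hFG]
  ring

end Matrix

theorem stmt_2 (r : ℕ) (a z : Fin r → ℂ) (q : ℂ)
    (hd : ∀ i, qp q (a i * z i) (r - 1) ≠ 0) :
    Matrix.det (Matrix.of fun i j : Fin r =>
      qp q (z i) (r - 1 - j.1) / qp q (a i * z i) (r - 1 - j.1))
    = (-1 : ℂ) ^ r.choose 2 * q ^ r.choose 3 *
      Matrix.det (Matrix.of fun i j : Fin r =>
        z i ^ (r - 1 - j.1) * qp q (a i) (r - 1 - j.1) / qp q (a i * z i) (r - 1 - j.1)) := by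
  rw [← prod_range_signedQBinomial_self]
  exact Matrix.det_of_eq_sum_triangular_rev (signedQBinomial q) (signedQBinomial_eq_zero_of_lt q)
    (fun i n => qp q (z i) n / qp q (a i * z i) n)
    (fun i m => z i ^ m * qp q (a i) m / qp q (a i * z i) m)
    fun i n hn =>
      qp_div_qp_eq_sum_signedQBinomial q (a i) (z i) n (qp_ne_zero_of_le (by omega) (hd i))
end
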